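/- Consider the additive map d : F₂[j] → F₂[j] given by d(f) = f + j·f². The images of the monomials j², j⁴, j⁶, … (all even powers j^{2k} with k ≥ 1) in the cokernel F₂[j]/d(F₂[j]) are linearly independent over F₂. In particular, the cokernel is an infinite-dimensional F₂-vector space. -/

import Mathlib

/-!
The map `f ↦ X * f ^ 2` sends `X ^ n` to `X ^ (2 * n + 1)`, and `2 * n + 2` has the same odd part
as `n + 1`. So, for each odd `m`, summing the coefficients of `g` at the exponents `n` with
`n + 1` of odd part `m` is a linear functional on `F₂[X]` that takes the same value on `f` and on
`X * f ^ 2` (coefficients satisfy `a ^ 2 = a`), hence vanishes on every `f + X * f ^ 2`. The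
functional for `m = 2 * i + 3` sends `X ^ (2 * (k + 1))` to `δ_ik`, which separates the classes.
-/

open Polynomial

noncomputable def oddPartCoeffSum (R : Type*) [Semiring R] (m : ℕ) : R[X] →ₗ[R] R :=
  lsum fun n => if ordCompl[2] (n + 1) = m then LinearMap.id else 0

section

variable {R : Type*}

theorem oddPartCoeffSum_monomial [Semiring R] (m n : ℕ) (a : R) :
    oddPartCoeffSum R m (monomial n a) = if ordCompl[2] (n + 1) = m then a else 0 := by
  rw [oddPartCoeffSum, lsum_apply, sum_monomial_index _ _ (by simp)]
  split_ifs <;> rfl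

theorem oddPartCoeffSum_X_pow_of_odd [Semiring R] (m : ℕ) {n : ℕ} (hn : Odd (n + 1)) :
    oddPartCoeffSum R m (X ^ n) = if n + 1 = m then 1 else 0 := by
  rw [← monomial_one_right_eq_X_pow, oddPartCoeffSum_monomial,
    (Nat.ordCompl_eq_self_iff_zero_or_not_dvd _ Nat.prime_two).mpr
      (Or.inr (Nat.two_dvd_ne_zero.mpr (Nat.odd_iff.mp hn)))]

theorem oddPartCoeffSum_X_mul_sq [CommSemiring R] [CharP R 2] (m : ℕ) (f : R[X]) :
    oddPartCoeffSum R m (X * f ^ 2) = oddPartCoeffSum R m f ^ 2 := by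
  induction f using Polynomial.induction_on' with
  | add p q hp hq => rw [add_pow_char, mul_add, map_add, map_add, hp, hq, add_pow_char]
  | monomial n a =>
    rw [monomial_pow, X_mul_monomial, oddPartCoeffSum_monomial, oddPartCoeffSum_monomial,
      show n * 2 + 1 + 1 = 2 ^ 1 * (n + 1) by ring, Nat.ordCompl_self_pow_mul _ _ Nat.prime_two]
    split_ifs <;> simp

end

theorem oddPartCoeffSum_add_X_mul_sq (m : ℕ) (f : (ZMod 2)[X]) :
    oddPartCoeffSum (ZMod 2) m (f + X * f ^ 2) = 0 := by
  rw [map_add, oddPartCoeffSum_X_mul_sq, ZMod.pow_card, CharTwo.add_self_eq_zero]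

theorem span_range_add_X_mul_sq_le_ker (m : ℕ) :
    Submodule.span (ZMod 2) (Set.range fun f : (ZMod 2)[X] => f + X * f ^ 2) ≤
      LinearMap.ker (oddPartCoeffSum (ZMod 2) m) :=
  Submodule.span_le.mpr <| Set.range_subset_iff.mpr (oddPartCoeffSum_add_X_mul_sq m)

/-- The images of the monomials `j^{2k}`, `k ≥ 1`, in the cokernel of the additive map
`d : F₂[j] → F₂[j]`, `d(f) = f + j·f²`, are linearly independent over `F₂`; in particular
the cokernel is infinite-dimensional. -/
theorem stmt2 :
    LinearIndependent (ZMod 2)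
      (fun k : ℕ =>
        (Submodule.Quotient.mk (Polynomial.X ^ (2 * (k + 1))) :
          Polynomial (ZMod 2) ⧸ Submodule.span (ZMod 2)
            (Set.range (fun f : Polynomial (ZMod 2) => f + Polynomial.X * f ^ 2)))) ∧
    ¬ Module.Finite (ZMod 2)
      (Polynomial (ZMod 2) ⧸ Submodule.span (ZMod 2)
        (Set.range (fun f : Polynomial (ZMod 2) => f + Polynomial.X * f ^ 2))) := by
  set N := Submodule.span (ZMod 2) (Set.range fun f : (ZMod 2)[X] => f + X * f ^ 2)
  let Ψ : (ZMod 2)[X] ⧸ N →ₗ[ZMod 2] ℕ → ZMod 2 :=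
    N.liftQ (LinearMap.pi fun i => oddPartCoeffSum (ZMod 2) (2 * i + 3)) <| by
      rw [LinearMap.ker_pi]
      exact le_iInf fun i => span_range_add_X_mul_sq_le_ker _
  have hΨ (k : ℕ) : Ψ (Submodule.Quotient.mk (X ^ (2 * (k + 1)))) = Pi.single k 1 := by
    ext i
    simp only [Ψ, Submodule.liftQ_apply, LinearMap.pi_apply,
      oddPartCoeffSum_X_pow_of_odd _ (show Odd (2 * (k + 1) + 1) by simp), Pi.single_apply]
    grind
  have hli : LinearIndependent (ZMod 2)
      fun k : ℕ => (Submodule.Quotient.mk (X ^ (2 * (k + 1))) : (ZMod 2)[X] ⧸ N) :=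
    .of_comp Ψ <| by
      simpa only [Function.comp_def, hΨ] using Pi.linearIndependent_single_one ℕ (ZMod 2)
  exact ⟨hli, fun _ => Module.Finite.not_linearIndependent_of_infinite _ hli⟩
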